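/- With N(e₃) = e₁ on ℂ⁴ (symplectic basis e₁,…,e₄) and F₀ the flag F₀³ = span(u₂), F₀² = span(u₂, u₃), the pair (σ, exp(σ_ℂ)F₀) with σ = ℝ_{≥0}N is a nilpotent orbit: (i) N F₀² ⊂ F₀¹ and N F₀³ ⊂ F₀² (where F₀¹ = (F₀³)^⊥ with respect to the symplectic form), and (ii) exp(iyN)F₀ ∈ D for all sufficiently large y > 0. -/

import Mathlib

open Matrix Complex NormedSpace

noncomputable section

/-- The symplectic form on `ℂ⁴` with Gram matrix `((0, -I), (I, 0))` in the real symplectic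
basis `e₁,…,e₄` (the standard basis). -/
def Be (x y : Fin 4 → ℂ) : ℂ :=
  -(x 0 * y 2) - x 1 * y 3 + x 2 * y 0 + x 3 * y 1

/-- Componentwise conjugation (the `e_i` are real). -/
def cjE (x : Fin 4 → ℂ) : Fin 4 → ℂ := fun i => starRingEnd ℂ (x i)

/-- The period domain `D` of weight-3 polarized Hodge structures with all `h^{p,q} = 1`,
in `e`-coordinates (sign conventions from the Weil operator, as in Statement 7). -/
def DflagE : Set (Submodule ℂ (Fin 4 → ℂ) × Submodule ℂ (Fin 4 → ℂ)) :=
  {F | F.1 ≤ F.2 ∧ Module.finrank ℂ F.1 = 1 ∧ Module.finrank ℂ F.2 = 2 ∧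
    (∀ x ∈ F.2, ∀ y ∈ F.2, Be x y = 0) ∧
    (∀ v ∈ F.1, v ≠ 0 → 0 < (-Complex.I * Be v (cjE v)).re) ∧
    (∀ v ∈ F.2, (∀ w ∈ F.1, Be v (cjE w) = 0) → v ≠ 0 →
      0 < (Complex.I * Be v (cjE v)).re)}

/-! `N` is the matrix unit `E₁₃`, so `N² = 0` and `exp (i y N) = 1 + i y N`. This fixes
`v = √2 u₂ = e₂ + i e₄` and sends `√2 u₃` to `w = (1 + y) e₁ - i e₃`, so the image flag is
`span v ⊂ span {v, w}`. Since `B(v, w) = 0` and `B(w, v̄) = 0`, the Hodge–Riemann conditions reduce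
to `-i B(v, v̄) = 2 > 0` and `i B(w, w̄) = 2 (1 + y) > 0`, which hold for every `y > -1`. -/

theorem NormedSpace.exp_eq_one_add_of_mul_self_eq_zero {𝔸 : Type*} [Ring 𝔸] [Algebra ℚ 𝔸]
    [TopologicalSpace 𝔸] [IsTopologicalRing 𝔸] {x : 𝔸} (hx : x * x = 0) :
    exp x = 1 + x := by
  have hpow : ∀ n, x ^ (n + 2) = 0 := fun n => by rw [pow_add, sq, hx, mul_zero]
  simp only [exp_eq_tsum_rat]
  rw [tsum_eq_sum (s := Finset.range 2)]
  · simp [Finset.sum_range_succ]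
  · intro n hn
    obtain ⟨m, rfl⟩ : ∃ m, n = m + 2 := ⟨n - 2, by simp at hn; omega⟩
    rw [hpow, smul_zero]

theorem Matrix.eq_single_of_mulVec_single {m n R : Type*} [Fintype n] [DecidableEq m]
    [DecidableEq n] [NonAssocSemiring R] {N : Matrix m n R} {i : m} {j : n}
    (hj : N *ᵥ Pi.single j 1 = Pi.single i 1) (hk : ∀ k, k ≠ j → N *ᵥ Pi.single k 1 = 0) :
    N = single i j 1 := by
  refine ext_of_mulVec_single fun k => ?_
  rcases eq_or_ne k j with rfl | hkj
  · rw [hj]; ext; simp [single_apply, Pi.single_apply, eq_comm]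
  · rw [hk k hkj]; ext; simp [hkj.symm]

@[simp] lemma Be_add_left (x x' y : Fin 4 → ℂ) : Be (x + x') y = Be x y + Be x' y := by
  simp only [Be, Pi.add_apply]; ring

@[simp] lemma Be_smul_left (a : ℂ) (x y : Fin 4 → ℂ) : Be (a • x) y = a * Be x y := by
  simp only [Be, Pi.smul_apply, smul_eq_mul]; ring

@[simp] lemma Be_add_right (x y y' : Fin 4 → ℂ) : Be x (y + y') = Be x y + Be x y' := by
  simp only [Be, Pi.add_apply]; ring

@[simp] lemma Be_smul_right (a : ℂ) (x y : Fin 4 → ℂ) : Be x (a • y) = a * Be x y := by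
  simp only [Be, Pi.smul_apply, smul_eq_mul]; ring

@[simp] lemma Be_zero_left (y : Fin 4 → ℂ) : Be 0 y = 0 := by simp [Be]

lemma Be_swap (x y : Fin 4 → ℂ) : Be y x = -Be x y := by simp only [Be]; ring

@[simp] lemma Be_self (x : Fin 4 → ℂ) : Be x x = 0 := by simp only [Be]; ring

@[simp] lemma cjE_smul (a : ℂ) (x : Fin 4 → ℂ) : cjE (a • x) = starRingEnd ℂ a • cjE x := by
  ext; simp [cjE]

lemma re_mul_Be_smul_cjE_smul (c a : ℂ) (v : Fin 4 → ℂ) :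
    (c * Be (a • v) (cjE (a • v))).re = normSq a * (c * Be v (cjE v)).re := by
  rw [cjE_smul, Be_smul_left, Be_smul_right, ← mul_assoc a, mul_conj, mul_left_comm,
    re_ofReal_mul]

lemma ne_zero_of_re_mul_Be_cjE_pos {c : ℂ} {v : Fin 4 → ℂ} (h : 0 < (c * Be v (cjE v)).re) :
    v ≠ 0 := by
  rintro rfl; simp at h

/- The nondegeneracy conditions (`v ≠ 0`, `v` and `w` independent) are forced by positivity. -/
theorem span_pair_mem_DflagE {v w : Fin 4 → ℂ} (hvw : Be v w = 0)
    (hv : 0 < (-I * Be v (cjE v)).re) (hwv : Be w (cjE v) = 0)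
    (hw : 0 < (I * Be w (cjE w)).re) :
    (Submodule.span ℂ {v}, Submodule.span ℂ {v, w}) ∈ DflagE := by
  have hBv : Be v (cjE v) ≠ 0 := fun h => by simp [h] at hv
  have hwv' : Be w v = 0 := by rw [Be_swap, hvw, neg_zero]
  have hcoeff : ∀ a b : ℂ, Be (a • v + b • w) (cjE v) = 0 → a = 0 := fun a b h => by
    simpa [hwv, hBv] using h
  have hindep : LinearIndependent ℂ ![v, w] := by
    refine LinearIndependent.pair_iff.mpr fun s t hst => ?_
    obtain rfl := hcoeff s t (by simp [hst])
    simpa [ne_zero_of_re_mul_Be_cjE_pos hw] using hst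
  refine ⟨Submodule.span_mono (by simp),
    finrank_span_singleton (ne_zero_of_re_mul_Be_cjE_pos hv), ?_, ?_, ?_, ?_⟩
  · rw [← Matrix.range_cons_cons_empty, finrank_span_eq_card hindep, Fintype.card_fin]
  · intro x hx z hz
    obtain ⟨a, b, rfl⟩ := Submodule.mem_span_pair.mp hx
    obtain ⟨a', b', rfl⟩ := Submodule.mem_span_pair.mp hz
    simp [hvw, hwv']
  · intro x hx hx0
    obtain ⟨a, rfl⟩ := Submodule.mem_span_singleton.mp hx
    rw [re_mul_Be_smul_cjE_smul]
    exact mul_pos (normSq_pos.mpr (by rintro rfl; simp at hx0)) hv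
  · intro x hx horth hx0
    obtain ⟨a, b, rfl⟩ := Submodule.mem_span_pair.mp hx
    obtain rfl := hcoeff a b (horth v (Submodule.mem_span_singleton_self v))
    rw [zero_smul, zero_add] at hx0 ⊢
    rw [re_mul_Be_smul_cjE_smul]
    exact mul_pos (normSq_pos.mpr (by rintro rfl; simp at hx0)) hw

theorem span_pair_one_add_mem_DflagE {y : ℝ} (hy : -1 < y) :
    (Submodule.span ℂ {![0, 1, 0, I]},
      Submodule.span ℂ {![0, 1, 0, I], ![1 + (y : ℂ), 0, -I, 0]}) ∈ DflagE := by
  have hy' : 0 < 1 + y := by linarith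
  apply span_pair_mem_DflagE
  · simp [Be]
  · simp [Be, cjE]
  · simp [Be, cjE]
  · simpa [Be, cjE] using hy'

lemma exp_I_smul_single_mulVec (y : ℝ) (x : Fin 4 → ℂ) :
    exp ((I * y) • single (0 : Fin 4) 2 (1 : ℂ)) *ᵥ x = x + Pi.single 0 (I * y * x 2) := by
  rw [exp_eq_one_add_of_mul_self_eq_zero (by simp), add_mulVec, one_mulVec, smul_mulVec,
    single_mulVec]
  ext i
  fin_cases i <;> simp

/-- With `N(e₃) = e₁` and the flag `F₀³ = span(u₂) ⊂ F₀² = span(u₂, u₃)`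
(where `u₂ = (e₂ + i e₄)/√2`, `u₃ = (e₁ - i e₃)/√2`), extended by
`F₀¹ = (F₀³)^⊥` (symplectic annihilator), the pair `(σ, exp(σ_ℂ) F₀)` with `σ = ℝ_{≥0} N`
is a nilpotent orbit: (i) `N F₀³ ⊆ F₀²` and `N F₀² ⊆ F₀¹`, and
(ii) `exp(i y N) F₀ ∈ D` for all sufficiently large `y > 0`. -/
theorem sigma_expF0_is_nilpotent_orbit
    (N : Matrix (Fin 4) (Fin 4) ℂ)
    (hN3 : N.mulVec (Pi.single 2 1) = Pi.single 0 1)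
    (hNj : ∀ j : Fin 4, j ≠ 2 → N.mulVec (Pi.single j 1) = 0)
    (u2 u3 : Fin 4 → ℂ)
    (hu2 : u2 = (Real.sqrt 2 : ℂ)⁻¹ • ![0, 1, 0, Complex.I])
    (hu3 : u3 = (Real.sqrt 2 : ℂ)⁻¹ • ![1, 0, -Complex.I, 0])
    (F3 F2 F1 : Submodule ℂ (Fin 4 → ℂ))
    (hF3 : F3 = Submodule.span ℂ {u2})
    (hF2 : F2 = Submodule.span ℂ {u2, u3})
    (hF1 : ∀ v : Fin 4 → ℂ, v ∈ F1 ↔ ∀ w ∈ F3, Be v w = 0) :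
    (F3.map N.mulVecLin ≤ F2 ∧ F2.map N.mulVecLin ≤ F1) ∧
    (∃ y₀ : ℝ, 0 < y₀ ∧ ∀ y : ℝ, y₀ ≤ y →
      (F3.map (exp ((Complex.I * y) • N)).mulVecLin,
       F2.map (exp ((Complex.I * y) • N)).mulVecLin) ∈ DflagE) := by
  obtain rfl : N = single 0 2 1 := eq_single_of_mulVec_single hN3 hNj
  have hc : IsUnit ((Real.sqrt 2 : ℂ)⁻¹) := by simp
  obtain rfl : F3 = Submodule.span ℂ {![0, 1, 0, I]} := by
    rw [hF3, hu2, Submodule.span_singleton_smul_eq hc]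
  obtain rfl : F2 = Submodule.span ℂ {![0, 1, 0, I], ![1, 0, -I, 0]} := by
    rw [hF2, hu2, hu3, Submodule.span_insert, Submodule.span_insert,
      Submodule.span_singleton_smul_eq hc, Submodule.span_singleton_smul_eq hc]
  have mem_F1 : ∀ x, Be x ![0, 1, 0, I] = 0 → x ∈ F1 := fun x hx => (hF1 x).mpr fun w hw => by
    obtain ⟨a, rfl⟩ := Submodule.mem_span_singleton.mp hw
    rw [Be_smul_right, hx, mul_zero]
  refine ⟨⟨?_, ?_⟩, 1, one_pos, fun y hy => ?_⟩
  · rw [Submodule.map_span_le]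
    simp [single_mulVec]
  · rw [Submodule.map_span_le]
    rintro x (rfl | rfl) <;> exact mem_F1 _ (by simp [single_mulVec, Be])
  · have hexp2 : exp ((I * y) • single 0 2 1) *ᵥ ![0, 1, 0, I] = ![0, 1, 0, I] := by
      rw [exp_I_smul_single_mulVec]
      simp
    have hexp3 : exp ((I * y) • single 0 2 1) *ᵥ ![1, 0, -I, 0] = ![1 + (y : ℂ), 0, -I, 0] := by
      rw [exp_I_smul_single_mulVec]
      ext i
      fin_cases i <;> simp [mul_right_comm _ _ I]
    simp only [Submodule.map_span, Set.image_singleton, Set.image_pair, mulVecLin_apply, hexp2,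
      hexp3]
    exact span_pair_one_add_mem_DflagE (by linarith)

end
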